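/- arXiv:2505.04929 — 2 statements merged into one kernel-verified Lean document; each statement's English description precedes it below -/
import Mathlib

section
/- Let n ≥ 3 and 2 ≤ k ≤ (n choose 2) be integers, let p ≥ 2 be the integer with k·(p choose 2) ≤ (n choose 2) < k·((p+1) choose 2), and write (n choose 2) = k·(p choose 2) + q·p + r with integers 0 ≤ q < k and 0 ≤ r < p. Then M(k,n) ≤ k·p − k + q if r ≤ (p−1)/2, and M(k,n) ≤ k·p − k + q + 1 − 2(p−r)/(p+1) if r ≥ (p−1)/2. Moreover, equality holds whenever K_n admits an edge decomposition into q copies of K_{p+1} and k−q copies of K_p (in the case r = 0), or into q copies of K_{p+1}, k−q−1 copies of K_p, and one copy of some graph G having (p choose 2)+r edges and Mad(G) = g((p choose 2)+r) (in the case 0 < r < p). -/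
/-!
Write the edge number of a graph as `m = C(p,2) + p a + w` with `0 ≤ w < p`. A vertex set `X`
spans at most `C(|X|,2)` and at most `m` edges; splitting at `|X| = p + a` gives
`Mad G ≤ p + a - 1 + max(0, (2w - p + 1)/(p + 1)) = (m - C(p,2))/p + p - 1 - δ(w)` with
`δ(w) = w/p - max(0, (2w - p + 1)/(p + 1))`. As a function of `w ∈ [0, p]`, `δ` is concave and
vanishes at both ends, hence subadditive on residues mod `p`. Over a decomposition the edge numbers
add up to `k C(p,2) + q p + r`, so the defects add up to at least `δ(r)`: this is the upper bound.
Conversely `K_s` has `Mad ≥ s - 1`, and `K_p` plus one vertex of degree `r` has `C(p,2) + r` edges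
and `Mad ≥ p - 1 + max(0, (2r - p + 1)/(p + 1))`, so the decompositions of the equality cases
attain the bound.
-/

/-- Number of edges of a finite simple graph. -/
noncomputable def edgeCnt {V : Type} [Fintype V] (G : SimpleGraph V) : ℕ :=
  G.edgeSet.ncard

/-- Number of edges of `G` with both endpoints in `X`. -/
noncomputable def inducedEdgeCnt {V : Type} [Fintype V] (G : SimpleGraph V) (X : Finset V) : ℕ :=
  {e : Sym2 V | e ∈ G.edgeSet ∧ ∀ v ∈ e, v ∈ X}.ncard

/-- Maximum average degree of a finite simple graph. -/
noncomputable def Mad {V : Type} [Fintype V] (G : SimpleGraph V) : ℝ :=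
  sSup {d : ℝ | ∃ X : Finset V, X.Nonempty ∧ d = 2 * (inducedEdgeCnt G X : ℝ) / (X.card : ℝ)}

/-- A `k`-decomposition of the complete graph `K_n`. -/
def IsKDecomp {k n : ℕ} (G : Fin k → SimpleGraph (Fin n)) : Prop :=
  (∀ i j, i ≠ j → Disjoint (G i).edgeSet (G j).edgeSet) ∧
  (⋃ i, (G i).edgeSet) = (⊤ : SimpleGraph (Fin n)).edgeSet

/-- `M(k,n)`: maximum of `Mad(G_1)+…+Mad(G_k)` over all `k`-decompositions of `K_n`. -/
noncomputable def MSum (k n : ℕ) : ℝ :=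
  sSup {s : ℝ | ∃ G : Fin k → SimpleGraph (Fin n), IsKDecomp G ∧ s = ∑ i, Mad (G i)}

/-- `M^L(k,N)`: maximum of `Mad(G_1)+…+Mad(G_k)` over all lists of `k` finite graphs
with `N` edges in total. -/
noncomputable def MSumL (k N : ℕ) : ℝ :=
  sSup {s : ℝ | ∃ (V : Fin k → Type) (hV : ∀ i, Fintype (V i)) (G : ∀ i, SimpleGraph (V i)),
    (∑ i, @edgeCnt (V i) (hV i) (G i)) = N ∧ s = ∑ i, @Mad (V i) (hV i) (G i)}

/-- `g(m)`: maximum of `Mad(G)` over all finite simple graphs with exactly `m` edges. -/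
noncomputable def gMax (m : ℕ) : ℝ :=
  sSup {d : ℝ | ∃ (V : Type) (hV : Fintype V) (G : SimpleGraph V),
    @edgeCnt V hV G = m ∧ d = @Mad V hV G}

/-- The complete graph on the vertex subset `S` inside `Fin n`. -/
def cliqueOn {n : ℕ} (S : Finset (Fin n)) : SimpleGraph (Fin n) :=
  SimpleGraph.fromRel (fun a b => a ∈ S ∧ b ∈ S)

noncomputable def madExcess (p w : ℝ) : ℝ := max 0 (2 * w - p + 1) / (p + 1)

theorem madExcess_nonneg {p : ℝ} (hp : 0 ≤ p) (w : ℝ) : 0 ≤ madExcess p w :=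
  div_nonneg (le_max_left _ _) (by linarith)

theorem one_le_add_of_two_mul_eq {p m : ℕ} {a w : ℤ} (hp : 0 < p) (hw : w < p)
    (h : 2 * (m : ℤ) = p * (p - 1) + 2 * p * a + 2 * w) : 1 ≤ p + a := by
  nlinarith

theorem two_mul_le_mul_add_madExcess {p m : ℕ} {a w : ℤ} (hwp : w < p)
    (hm : 2 * (m : ℤ) = p * (p - 1) + 2 * p * a + 2 * w) :
    2 * (m : ℝ) ≤ (p + a + 1) * (p + a - 1 + madExcess p w) := by
  have hmR : (2 * m : ℝ) = p * (p - 1) + 2 * p * a + 2 * w := by exact_mod_cast hm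
  have hp1 : (0 : ℝ) < p + 1 := by positivity
  rcases le_or_gt (2 * (w : ℝ) - p + 1) 0 with hneg | hpos
  · rw [madExcess, max_eq_left hneg, zero_div]
    nlinarith [sq_nonneg (a : ℝ)]
  · set e := (2 * (w : ℝ) - p + 1) / (p + 1)
    rw [madExcess, max_eq_right hpos.le]
    have he1 : e * (p + 1) = 2 * w - p + 1 := div_mul_cancel₀ _ hp1.ne'
    have he2 : e < 1 := by
      rw [div_lt_one hp1]
      have : (w : ℝ) + 1 ≤ p := by exact_mod_cast hwp
      linarith
    have hae : 0 ≤ (a : ℝ) * (a + e) := by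
      rcases le_or_gt 0 a with ha | ha
      · exact mul_nonneg (by exact_mod_cast ha) (by positivity)
      · have : (a : ℝ) ≤ -1 := by exact_mod_cast Int.le_sub_one_of_lt ha
        exact mul_nonneg_of_nonpos_of_nonpos (by linarith) (by linarith)
    nlinarith

theorem two_mul_div_le_add_madExcess {p m c x : ℕ} {a w : ℤ} (hp : 0 < p) (hwp : w < p)
    (hm : 2 * (m : ℤ) = p * (p - 1) + 2 * p * a + 2 * w) (hcm : c ≤ m)
    (hx : 0 < x) (hcx : 2 * (c : ℝ) ≤ x * (x - 1)) :
    2 * (c : ℝ) / x ≤ p + a - 1 + madExcess p w := by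
  have ht : (1 : ℝ) ≤ p + a := by exact_mod_cast one_le_add_of_two_mul_eq hp hwp hm
  have hxR : (0 : ℝ) < x := by exact_mod_cast hx
  have hE := madExcess_nonneg (Nat.cast_nonneg p) (w : ℝ)
  have hxE := mul_nonneg hxR.le hE
  rw [div_le_iff₀ hxR]
  rcases le_or_gt (x : ℤ) (p + a) with hxt | hxt
  · have hxt' : (x : ℝ) ≤ p + a := by exact_mod_cast hxt
    nlinarith
  · -- `2c ≤ 2m ≤ (p + a + 1) B ≤ x B` for the right-hand side `B`
    have hxt' : (p : ℝ) + a + 1 ≤ x := by exact_mod_cast hxt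
    have hcm' : (c : ℝ) ≤ m := by exact_mod_cast hcm
    have := two_mul_le_mul_add_madExcess hwp hm
    nlinarith [mul_le_mul_of_nonneg_right hxt'
      (by linarith : (0 : ℝ) ≤ p + a - 1 + madExcess p w)]

theorem madExcess_add_le {p u v : ℝ} (hp : 1 ≤ p) (hu : 0 ≤ u) (hv : 0 ≤ v) :
    madExcess p u + madExcess p v ≤ madExcess p (u + v) := by
  simp only [madExcess, ← add_div]
  gcongr
  rcases max_cases 0 (2 * u - p + 1) with h | h <;>
    rcases max_cases 0 (2 * v - p + 1) with h' | h' <;>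
    linarith [le_max_left 0 (2 * (u + v) - p + 1), le_max_right 0 (2 * (u + v) - p + 1)]

theorem madExcess_add_le_add_one {p u v : ℝ} (hp : 0 ≤ p) (hu : u ≤ p) (hv : v ≤ p) :
    madExcess p u + madExcess p v ≤ madExcess p (u + v - p) + 1 := by
  have hp1 : 0 < p + 1 := by linarith
  rw [madExcess, madExcess, madExcess, ← add_div, div_add_one hp1.ne']
  refine div_le_div_of_nonneg_right ?_ hp1.le
  rcases max_cases 0 (2 * u - p + 1) with h | h <;>
    rcases max_cases 0 (2 * v - p + 1) with h' | h' <;>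
    linarith [le_max_left 0 (2 * (u + v - p) - p + 1), le_max_right 0 (2 * (u + v - p) - p + 1)]

noncomputable def residueDefect (p : ℕ) (z : ℤ) : ℝ :=
  ((z % p : ℤ) : ℝ) / p - madExcess p (z % p : ℤ)

theorem residueDefect_zero {p : ℕ} (hp : 0 < p) : residueDefect p 0 = 0 := by
  have : (1 : ℝ) ≤ p := by exact_mod_cast hp
  simp [residueDefect, madExcess, max_eq_left (by linarith : -(p : ℝ) + 1 ≤ 0)]

theorem residueDefect_add_le {p : ℕ} (hp : 0 < p) (y z : ℤ) :
    residueDefect p (y + z) ≤ residueDefect p y + residueDefect p z := by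
  have hp' : (0 : ℤ) < p := by exact_mod_cast hp
  have hpR : (0 : ℝ) < p := by exact_mod_cast hp
  have hu := Int.emod_nonneg y hp'.ne'
  have hv := Int.emod_nonneg z hp'.ne'
  have hup := Int.emod_lt_of_pos y hp'
  have hvp := Int.emod_lt_of_pos z hp'
  simp only [residueDefect, Int.add_emod y z]
  rcases lt_or_ge (y % p + z % p) p with h | h
  · rw [Int.emod_eq_of_lt (by omega) h, Int.cast_add, add_div]
    have := madExcess_add_le (by exact_mod_cast hp : (1 : ℝ) ≤ p) (Int.cast_nonneg hu)
      (Int.cast_nonneg hv)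
    linarith
  · rw [← Int.sub_emod_right, Int.emod_eq_of_lt (by omega) (by omega)]
    have := madExcess_add_le_add_one hpR.le (u := ((y % p : ℤ) : ℝ))
      (v := ((z % p : ℤ) : ℝ))
      (by exact_mod_cast hup.le) (by exact_mod_cast hvp.le)
    push_cast
    rw [sub_div, add_div, div_self hpR.ne']
    linarith

theorem residueDefect_mul_add {p q r : ℕ} (hr : r < p) :
    residueDefect p (q * p + r) = r / p - madExcess p r := by
  have : ((q * p + r : ℤ)) % p = r := by
    rw [add_comm, Int.add_mul_emod_self_right]
    exact Int.emod_eq_of_lt (by positivity) (by exact_mod_cast hr)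
  simp [residueDefect, this]

theorem two_mul_choose_two (p : ℕ) : 2 * (p.choose 2 : ℤ) = p * (p - 1) := by
  have := Nat.cast_choose_two ℝ p
  exact_mod_cast (by linarith : 2 * (p.choose 2 : ℝ) = p * (p - 1))

section Mad

variable {V : Type} [Fintype V]

theorem inducedEdgeCnt_le_edgeCnt (G : SimpleGraph V) (X : Finset V) :
    inducedEdgeCnt G X ≤ edgeCnt G :=
  Set.ncard_le_ncard fun _ he => he.1

theorem inducedEdgeCnt_univ (G : SimpleGraph V) : inducedEdgeCnt G Finset.univ = edgeCnt G := by
  simp [inducedEdgeCnt, edgeCnt]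

theorem inducedEdgeCnt_eq_ncard_induce (G : SimpleGraph V) (X : Finset V) :
    inducedEdgeCnt G X = (G.induce (X : Set V)).edgeSet.ncard := by
  rw [inducedEdgeCnt, ← Set.ncard_image_of_injective _ (Sym2.map.injective Subtype.val_injective)]
  congr 1
  ext e
  refine e.ind fun a b => ?_
  simp only [SimpleGraph.mem_edgeSet, Set.mem_ofPred_eq, Sym2.mem_iff, forall_eq_or_imp,
    forall_eq, Set.mem_image]
  constructor
  · rintro ⟨hab, ha, hb⟩
    exact ⟨s(⟨a, ha⟩, ⟨b, hb⟩), hab, rfl⟩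
  · rintro ⟨x, hx, hxe⟩
    induction x with | _ u v => ?_
    rw [Sym2.map_mk, Sym2.eq_iff] at hxe
    rcases hxe with ⟨rfl, rfl⟩ | ⟨rfl, rfl⟩
    exacts [⟨hx, u.2, v.2⟩, ⟨hx.symm, v.2, u.2⟩]

theorem two_mul_inducedEdgeCnt_le (G : SimpleGraph V) (X : Finset V) :
    2 * (inducedEdgeCnt G X : ℝ) ≤ X.card * (X.card - 1) := by
  classical
  have h : (inducedEdgeCnt G X : ℝ) ≤ (X.card.choose 2 : ℕ) := by
    rw [inducedEdgeCnt_eq_ncard_induce, Set.ncard_eq_toFinset_card']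
    exact_mod_cast SimpleGraph.card_edgeFinset_le_card_choose_two.trans_eq (by simp)
  rw [Nat.cast_choose_two] at h
  linarith

theorem two_mul_inducedEdgeCnt_of_isClique {G : SimpleGraph V} {X : Finset V}
    (hX : G.IsClique (X : Set V)) : 2 * (inducedEdgeCnt G X : ℝ) = X.card * (X.card - 1) := by
  classical
  rw [inducedEdgeCnt_eq_ncard_induce, SimpleGraph.induce_eq_top.2 hX,
    Set.ncard_eq_toFinset_card', ← SimpleGraph.edgeFinset,
    SimpleGraph.card_edgeFinset_top_eq_card_choose_two]
  simp [Nat.cast_choose_two]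
  ring

theorem two_mul_inducedEdgeCnt_div_le (G : SimpleGraph V) (X : Finset V) :
    2 * (inducedEdgeCnt G X : ℝ) / X.card ≤ 2 * edgeCnt G := by
  have h : (inducedEdgeCnt G X : ℝ) ≤ edgeCnt G := by
    exact_mod_cast inducedEdgeCnt_le_edgeCnt G X
  rcases X.eq_empty_or_nonempty with rfl | hX
  · simp
  · calc 2 * (inducedEdgeCnt G X : ℝ) / X.card ≤ 2 * inducedEdgeCnt G X :=
          div_le_self (by positivity) (by exact_mod_cast hX.card_pos)
      _ ≤ 2 * edgeCnt G := by linarith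

theorem Mad_nonneg (G : SimpleGraph V) : 0 ≤ Mad G :=
  Real.sSup_nonneg <| by rintro _ ⟨X, -, rfl⟩; positivity

theorem Mad_le_of_forall {G : SimpleGraph V} {B : ℝ} (hB : 0 ≤ B)
    (h : ∀ X : Finset V, X.Nonempty → 2 * (inducedEdgeCnt G X : ℝ) / X.card ≤ B) :
    Mad G ≤ B :=
  Real.sSup_le (by rintro _ ⟨X, hX, rfl⟩; exact h X hX) hB

theorem Mad_le_two_mul_edgeCnt (G : SimpleGraph V) : Mad G ≤ 2 * edgeCnt G :=
  Mad_le_of_forall (by positivity) fun X _ => two_mul_inducedEdgeCnt_div_le G X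

theorem le_Mad (G : SimpleGraph V) {X : Finset V} (hX : X.Nonempty) :
    2 * (inducedEdgeCnt G X : ℝ) / X.card ≤ Mad G :=
  le_csSup ⟨2 * edgeCnt G, by rintro _ ⟨X, -, rfl⟩; exact two_mul_inducedEdgeCnt_div_le G X⟩
    ⟨X, hX, rfl⟩

theorem le_Mad_of_isClique {G : SimpleGraph V} {X : Finset V} (hX : G.IsClique (X : Set V)) :
    (X.card : ℝ) - 1 ≤ Mad G := by
  rcases X.eq_empty_or_nonempty with rfl | hne
  · simpa using (Mad_nonneg G).trans' (by norm_num)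
  · have hx : (0 : ℝ) < X.card := by exact_mod_cast hne.card_pos
    calc (X.card : ℝ) - 1 = 2 * (inducedEdgeCnt G X : ℝ) / X.card := by
          rw [two_mul_inducedEdgeCnt_of_isClique hX]; field_simp
      _ ≤ Mad G := le_Mad G hne

theorem two_mul_edgeCnt_div_card_le_Mad (G : SimpleGraph V) [Nonempty V] :
    2 * (edgeCnt G : ℝ) / Fintype.card V ≤ Mad G := by
  simpa [inducedEdgeCnt_univ] using le_Mad G Finset.univ_nonempty

theorem Mad_le_sub_residueDefect (G : SimpleGraph V) {p : ℕ} (hp : 0 < p) :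
    Mad G ≤ ((edgeCnt G - p.choose 2 : ℤ) : ℝ) / p + p - 1
      - residueDefect p (edgeCnt G - p.choose 2) := by
  set z : ℤ := edgeCnt G - p.choose 2
  have hp' : (0 : ℤ) < p := by exact_mod_cast hp
  have hwp := Int.emod_lt_of_pos z hp'
  have hdiv := Int.mul_ediv_add_emod z p
  have hm : 2 * (edgeCnt G : ℤ) = p * (p - 1) + 2 * p * (z / p) + 2 * (z % p) := by
    linarith [two_mul_choose_two p]
  have hbound : (z : ℝ) / p + p - 1 - residueDefect p z
      = p + (z / p : ℤ) - 1 + madExcess p (z % p : ℤ) := by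
    have hzR : (z : ℝ) = p * (z / p : ℤ) + (z % p : ℤ) := by exact_mod_cast hdiv.symm
    rw [residueDefect, hzR]
    field_simp
    ring
  have hnonneg : (0 : ℝ) ≤ p + (z / p : ℤ) - 1 + madExcess p (z % p : ℤ) := by
    have : (1 : ℝ) ≤ p + (z / p : ℤ) := by exact_mod_cast one_le_add_of_two_mul_eq hp hwp hm
    linarith [madExcess_nonneg (Nat.cast_nonneg p) ((z % p : ℤ) : ℝ)]
  rw [hbound]
  exact Mad_le_of_forall hnonneg fun X hX => two_mul_div_le_add_madExcess hp hwp hm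
    (inducedEdgeCnt_le_edgeCnt G X) hX.card_pos (two_mul_inducedEdgeCnt_le G X)

theorem sum_Mad_le {ι : Type*} (s : Finset ι) (G : ι → SimpleGraph V) {p : ℕ} (hp : 0 < p) :
    ∑ i ∈ s, Mad (G i) ≤ ((∑ i ∈ s, edgeCnt (G i) - s.card * p.choose 2 : ℤ) : ℝ) / p
      + s.card * (p - 1) - residueDefect p (∑ i ∈ s, edgeCnt (G i) - s.card * p.choose 2) := by
  set z : ι → ℤ := fun i => edgeCnt (G i) - p.choose 2
  have hz : ∑ i ∈ s, z i
      = ((∑ i ∈ s, edgeCnt (G i) : ℕ) : ℤ) - s.card * p.choose 2 := by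
    simp [z, Finset.sum_sub_distrib]
  rw [← hz]
  calc ∑ i ∈ s, Mad (G i)
      ≤ ∑ i ∈ s, ((z i : ℝ) / p + p - 1 - residueDefect p (z i)) :=
        Finset.sum_le_sum fun i _ => Mad_le_sub_residueDefect (G i) hp
    _ = ((∑ i ∈ s, z i : ℤ) : ℝ) / p + s.card * (p - 1)
          - ∑ i ∈ s, residueDefect p (z i) := by
        simp only [Finset.sum_sub_distrib, Finset.sum_add_distrib, Int.cast_sum, Finset.sum_div,
          Finset.sum_const, nsmul_eq_mul]
        ring
    _ ≤ _ := by
        linarith [Finset.le_sum_of_subadditive (residueDefect p) (residueDefect_zero hp).le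
          (residueDefect_add_le hp) s z]

end Mad

/-- `K_p` on the first `p` vertices, with the last vertex joined to the first `r` of them. -/
def cliquePlusVertex (p r : ℕ) : SimpleGraph (Fin (p + 1)) :=
  SimpleGraph.fromRel fun a b => a ≠ Fin.last p ∧ b ≠ Fin.last p ∨ a.val < r

theorem cliquePlusVertex_isClique (p r : ℕ) :
    (cliquePlusVertex p r).IsClique ({Fin.last p}ᶜ : Finset (Fin (p + 1))) := by
  intro a ha b hb hab
  simp_all [cliquePlusVertex]

theorem edgeCnt_cliquePlusVertex {p r : ℕ} (hr : r ≤ p) :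
    edgeCnt (cliquePlusVertex p r) = p.choose 2 + r := by
  classical
  have hdeg : (cliquePlusVertex p r).degree (Fin.last p) = r := by
    rw [← SimpleGraph.card_neighborFinset_eq_degree, SimpleGraph.neighborFinset_eq_filter]
    convert (Fin.card_filter_val_lt (n := p + 1) (m := r)).trans (min_eq_right (by omega))
      using 2
    ext w
    simp [cliquePlusVertex, Fin.ext_iff]
    omega
  have hdel := (cliquePlusVertex p r).card_edgeFinset_deleteIncidenceSet (Fin.last p)
  have hle := (cliquePlusVertex p r).degree_le_card_edgeFinset (Fin.last p)
  rw [← SimpleGraph.card_edgeFinset_induce_compl_singleton] at hdel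
  simp only [SimpleGraph.edgeFinset, ← Set.ncard_eq_toFinset_card', hdeg] at hdel hle
  rw [← Finset.coe_singleton, ← Finset.coe_compl, ← inducedEdgeCnt_eq_ncard_induce] at hdel
  have hclique := two_mul_inducedEdgeCnt_of_isClique (cliquePlusVertex_isClique p r)
  rw [hdel, Nat.cast_sub hle, Finset.card_compl, Finset.card_singleton, Fintype.card_fin,
    Nat.add_sub_cancel] at hclique
  have := Nat.cast_choose_two ℝ p
  exact_mod_cast
    (by unfold edgeCnt; linarith : (edgeCnt (cliquePlusVertex p r) : ℝ) = p.choose 2 + r)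

theorem sub_one_add_madExcess_le_gMax {p r : ℕ} (hr : r ≤ p) :
    (p : ℝ) - 1 + madExcess p r ≤ gMax (p.choose 2 + r) := by
  have hle : Mad (cliquePlusVertex p r) ≤ gMax (p.choose 2 + r) :=
    le_csSup ⟨2 * (p.choose 2 + r : ℕ), by
      rintro _ ⟨V, hV, G, hG, rfl⟩; simpa [hG] using Mad_le_two_mul_edgeCnt G⟩
      ⟨_, _, _, edgeCnt_cliquePlusVertex hr, rfl⟩
  refine le_trans ?_ hle
  rcases le_or_gt (2 * (r : ℝ) - p + 1) 0 with hneg | hpos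
  · have hclique := le_Mad_of_isClique (cliquePlusVertex_isClique p r)
    rw [Finset.card_compl, Finset.card_singleton, Fintype.card_fin, Nat.add_sub_cancel] at hclique
    rwa [madExcess, max_eq_left hneg, zero_div, add_zero]
  · have hall := two_mul_edgeCnt_div_card_le_Mad (cliquePlusVertex p r)
    rw [edgeCnt_cliquePlusVertex hr, Fintype.card_fin] at hall
    refine le_of_eq_of_le ?_ hall
    rw [madExcess, max_eq_right hpos.le]
    push_cast
    rw [Nat.cast_choose_two]
    field_simp
    ring

theorem cliqueOn_isClique {n : ℕ} (S : Finset (Fin n)) :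
    (cliqueOn S).IsClique (S : Set (Fin n)) := by
  intro a ha b hb hab
  simp_all [cliqueOn]

section Decomposition

variable {k n : ℕ}

theorem sum_edgeCnt_of_isKDecomp {G : Fin k → SimpleGraph (Fin n)} (hG : IsKDecomp G) :
    ∑ i, edgeCnt (G i) = n.choose 2 := by
  classical
  have h := Set.ncard_iUnion_of_finite (fun i => (G i).edgeSet.toFinite) hG.1
  rw [hG.2, finsum_eq_sum_of_fintype, Set.ncard_eq_toFinset_card', ← SimpleGraph.edgeFinset,
    SimpleGraph.card_edgeFinset_top_eq_card_choose_two, Fintype.card_fin] at h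
  exact h.symm

theorem sum_Mad_le_of_isKDecomp {p q r : ℕ} {G : Fin k → SimpleGraph (Fin n)} (hG : IsKDecomp G)
    (hp : 0 < p) (hr : r < p) (hN : n.choose 2 = k * p.choose 2 + q * p + r) :
    ∑ i, Mad (G i) ≤ k * (p - 1) + q + madExcess p r := by
  have h := sum_Mad_le Finset.univ G hp
  have hz : ((k * p.choose 2 + q * p + r : ℕ) : ℤ) - k * p.choose 2 = q * p + r := by
    push_cast; ring
  rw [sum_edgeCnt_of_isKDecomp hG, hN, Finset.card_univ, Fintype.card_fin, hz,
    residueDefect_mul_add hr] at h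
  refine h.trans_eq ?_
  have : (p : ℝ) ≠ 0 := by positivity
  push_cast
  field_simp
  ring

theorem MSum_le {p q r : ℕ} (hp : 0 < p) (hr : r < p)
    (hN : n.choose 2 = k * p.choose 2 + q * p + r) :
    MSum k n ≤ k * (p - 1) + q + madExcess p r := by
  have : (1 : ℝ) ≤ p := by exact_mod_cast hp
  refine Real.sSup_le (by rintro _ ⟨G, hG, rfl⟩; exact sum_Mad_le_of_isKDecomp hG hp hr hN) ?_
  have := madExcess_nonneg (Nat.cast_nonneg p) (r : ℝ)
  positivity

theorem sum_Mad_le_MSum {G : Fin k → SimpleGraph (Fin n)} (hG : IsKDecomp G) :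
    ∑ i, Mad (G i) ≤ MSum k n := by
  refine le_csSup ⟨2 * n.choose 2, ?_⟩ ⟨G, hG, rfl⟩
  rintro _ ⟨H, hH, rfl⟩
  calc ∑ i, Mad (H i) ≤ ∑ i, 2 * (edgeCnt (H i) : ℝ) :=
        Finset.sum_le_sum fun i _ => Mad_le_two_mul_edgeCnt _
    _ = 2 * n.choose 2 := by
        rw [← Finset.mul_sum, ← sum_edgeCnt_of_isKDecomp hH]; push_cast; rfl

theorem le_sum_Mad_of_eq_cliqueOn {ι : Type*} (s : Finset ι) {G : ι → SimpleGraph (Fin n)}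
    {S : ι → Finset (Fin n)} {p : ℕ} (hG : ∀ i ∈ s, G i = cliqueOn (S i))
    (hS : ∀ i ∈ s, (S i).card = p + 1 ∨ (S i).card = p) :
    s.card * ((p : ℝ) - 1) + (s.filter fun i => (S i).card = p + 1).card
      ≤ ∑ i ∈ s, Mad (G i) := by
  have hterm : ∀ i ∈ s,
      ((S i).card : ℝ) - 1 = (p - 1) + if (S i).card = p + 1 then 1 else 0 := by
    intro i hi
    rcases hS i hi with h | h <;> simp [h]
  calc s.card * ((p : ℝ) - 1) + (s.filter fun i => (S i).card = p + 1).card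
      = ∑ i ∈ s, (((S i).card : ℝ) - 1) := by
        rw [Finset.sum_congr rfl hterm, Finset.sum_add_distrib, Finset.sum_boole,
          Finset.sum_const, nsmul_eq_mul]
    _ ≤ ∑ i ∈ s, Mad (G i) := Finset.sum_le_sum fun i hi => by
        rw [hG i hi]; exact le_Mad_of_isClique (cliqueOn_isClique (S i))

end Decomposition

theorem madSum_upper_and_equality_general (n k p q r : ℕ) (hp : 2 ≤ p)
    (hN : Nat.choose n 2 = k * Nat.choose p 2 + q * p + r) (hr : r < p) :
    (2 * r + 1 ≤ p → MSum k n ≤ (k : ℝ) * p - k + q) ∧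
    (p ≤ 2 * r + 1 →
      MSum k n ≤ (k : ℝ) * p - k + q + 1 - 2 * ((p : ℝ) - r) / ((p : ℝ) + 1)) ∧
    (r = 0 →
      (∃ S : Fin k → Finset (Fin n),
        IsKDecomp (fun i => cliqueOn (S i)) ∧
        (Finset.univ.filter (fun i => (S i).card = p + 1)).card = q ∧
        (∀ i, (S i).card = p + 1 ∨ (S i).card = p)) →
      MSum k n = (k : ℝ) * p - k + q) ∧
    (0 < r →
      (∃ (G : Fin k → SimpleGraph (Fin n)) (i₀ : Fin k), IsKDecomp G ∧
        edgeCnt (G i₀) = Nat.choose p 2 + r ∧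
        Mad (G i₀) = gMax (Nat.choose p 2 + r) ∧
        ∃ S : Fin k → Finset (Fin n),
          (∀ i, i ≠ i₀ → G i = cliqueOn (S i)) ∧
          ((Finset.univ.erase i₀).filter (fun i => (S i).card = p + 1)).card = q ∧
          (∀ i, i ≠ i₀ → (S i).card = p + 1 ∨ (S i).card = p)) →
      ((2 * r + 1 ≤ p → MSum k n = (k : ℝ) * p - k + q) ∧
       (p ≤ 2 * r + 1 →
         MSum k n = (k : ℝ) * p - k + q + 1 - 2 * ((p : ℝ) - r) / ((p : ℝ) + 1)))) := by
  have hUB := MSum_le (by omega) hr hN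
  have hsmall : 2 * r + 1 ≤ p → (k : ℝ) * (p - 1) + q + madExcess p r = k * p - k + q := by
    intro h
    rw [madExcess, max_eq_left (by linarith [(by exact_mod_cast h : (2 * r + 1 : ℝ) ≤ p)]),
      zero_div]
    ring
  have hlarge : p ≤ 2 * r + 1 → (k : ℝ) * (p - 1) + q + madExcess p r
      = k * p - k + q + 1 - 2 * ((p : ℝ) - r) / ((p : ℝ) + 1) := by
    intro h
    rw [madExcess, max_eq_right (by linarith [(by exact_mod_cast h : (p : ℝ) ≤ 2 * r + 1)])]
    field_simp
    ring
  refine ⟨fun h => hUB.trans_eq (hsmall h), fun h => hUB.trans_eq (hlarge h), ?_, ?_⟩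
  · rintro rfl ⟨S, hS, hcount, hcard⟩
    have hcliques := le_sum_Mad_of_eq_cliqueOn Finset.univ (G := fun i => cliqueOn (S i))
      (fun i _ => rfl) (fun i _ => hcard i)
    rw [hcount, Finset.card_univ, Fintype.card_fin] at hcliques
    refine le_antisymm (hUB.trans_eq (hsmall (by omega))) ?_
    calc (k : ℝ) * p - k + q = k * (p - 1) + q := by ring
      _ ≤ _ := hcliques.trans (sum_Mad_le_MSum hS)
  · rintro - ⟨G, i₀, hG, -, hMad, S, hGS, hcount, hcard⟩
    have hcliques := le_sum_Mad_of_eq_cliqueOn (Finset.univ.erase i₀) (G := G)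
      (fun i hi => hGS i (Finset.ne_of_mem_erase hi))
      (fun i hi => hcard i (Finset.ne_of_mem_erase hi))
    rw [hcount, Finset.card_erase_of_mem (Finset.mem_univ i₀), Finset.card_univ, Fintype.card_fin,
      Nat.cast_pred i₀.pos] at hcliques
    have hLB : (k : ℝ) * (p - 1) + q + madExcess p r ≤ MSum k n :=
      calc (k : ℝ) * (p - 1) + q + madExcess p r
          = ((p : ℝ) - 1 + madExcess p r) + ((k - 1) * (p - 1) + q) := by ring
        _ ≤ Mad (G i₀) + ∑ i ∈ Finset.univ.erase i₀, Mad (G i) :=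
          add_le_add (hMad ▸ sub_one_add_madExcess_le_gMax hr.le) hcliques
        _ = ∑ i, Mad (G i) := Finset.add_sum_erase _ (fun i => Mad (G i)) (Finset.mem_univ i₀)
        _ ≤ MSum k n := sum_Mad_le_MSum hG
    exact ⟨fun h => le_antisymm (hUB.trans_eq (hsmall h)) ((hsmall h).symm.trans_le hLB),
      fun h => le_antisymm (hUB.trans_eq (hlarge h)) ((hlarge h).symm.trans_le hLB)⟩

/-- upper bound for `M(k,n)` and sufficient condition for equality. -/
theorem madSum_upper_and_equality (n k p q r : ℕ) (hn : 3 ≤ n) (hk2 : 2 ≤ k)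
    (hk : k ≤ Nat.choose n 2) (hp : 2 ≤ p)
    (h1 : k * Nat.choose p 2 ≤ Nat.choose n 2)
    (h2 : Nat.choose n 2 < k * Nat.choose (p + 1) 2)
    (hN : Nat.choose n 2 = k * Nat.choose p 2 + q * p + r) (hq : q < k) (hr : r < p) :
    (2 * r + 1 ≤ p → MSum k n ≤ (k : ℝ) * p - k + q) ∧
    (p ≤ 2 * r + 1 →
      MSum k n ≤ (k : ℝ) * p - k + q + 1 - 2 * ((p : ℝ) - r) / ((p : ℝ) + 1)) ∧
    (r = 0 →
      (∃ S : Fin k → Finset (Fin n),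
        IsKDecomp (fun i => cliqueOn (S i)) ∧
        (Finset.univ.filter (fun i => (S i).card = p + 1)).card = q ∧
        (∀ i, (S i).card = p + 1 ∨ (S i).card = p)) →
      MSum k n = (k : ℝ) * p - k + q) ∧
    (0 < r →
      (∃ (G : Fin k → SimpleGraph (Fin n)) (i₀ : Fin k), IsKDecomp G ∧
        edgeCnt (G i₀) = Nat.choose p 2 + r ∧
        Mad (G i₀) = gMax (Nat.choose p 2 + r) ∧
        ∃ S : Fin k → Finset (Fin n),
          (∀ i, i ≠ i₀ → G i = cliqueOn (S i)) ∧
          ((Finset.univ.erase i₀).filter (fun i => (S i).card = p + 1)).card = q ∧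
          (∀ i, i ≠ i₀ → (S i).card = p + 1 ∨ (S i).card = p)) →
      ((2 * r + 1 ≤ p → MSum k n = (k : ℝ) * p - k + q) ∧
       (p ≤ 2 * r + 1 →
         MSum k n = (k : ℝ) * p - k + q + 1 - 2 * ((p : ℝ) - r) / ((p : ℝ) + 1)))) :=
  madSum_upper_and_equality_general n k p q r hp hN hr
end

section
/- Let n ≥ 3 and 2 ≤ k ≤ (n choose 2). Suppose G_1,…,G_k are pairwise edge-disjoint subgraphs of K_n with Mad(G_1)+…+Mad(G_k) = M(k,n), and for each j = 1,…,k let X_j ⊆ V(K_n) be a nonempty set realizing Mad(G_j), i.e., 2·e(G_j[X_j])/|X_j| = Mad(G_j). Then X_1 ∪ … ∪ X_k = V(K_n). -/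
section AuxHelpers
variable {V : Type} [Fintype V]

lemma madSet_bddAbove (G : SimpleGraph V) :
    BddAbove {d : ℝ | ∃ X : Finset V, X.Nonempty ∧ d = 2 * (inducedEdgeCnt G X : ℝ) / (X.card : ℝ)} := by
  apply Set.Finite.bddAbove
  apply Set.Finite.subset
    (Set.finite_range (fun X : Finset V => 2 * (inducedEdgeCnt G X : ℝ) / (X.card : ℝ)))
  rintro d ⟨Y, -, rfl⟩
  exact ⟨Y, rfl⟩

lemma le_mad (G : SimpleGraph V) (X : Finset V) (hX : X.Nonempty) :
    2 * (inducedEdgeCnt G X : ℝ) / (X.card : ℝ) ≤ Mad G :=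
  le_csSup (madSet_bddAbove G) ⟨X, hX, rfl⟩

lemma mad_le [Nonempty V] (G : SimpleGraph V) (B : ℝ)
    (h : ∀ X : Finset V, X.Nonempty → 2 * (inducedEdgeCnt G X : ℝ) / (X.card : ℝ) ≤ B) :
    Mad G ≤ B :=
  csSup_le ⟨_, Finset.univ, Finset.univ_nonempty, rfl⟩ (by rintro d ⟨Y, hY, rfl⟩; exact h Y hY)

lemma inducedEdgeCnt_mono {G H : SimpleGraph V} (h : G ≤ H) (X : Finset V) :
    inducedEdgeCnt G X ≤ inducedEdgeCnt H X := by
  classical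
  apply Set.ncard_le_ncard _ (Set.toFinite _)
  rintro e ⟨he, hX⟩
  exact ⟨SimpleGraph.edgeSet_mono h he, hX⟩

lemma mad_mono [Nonempty V] {G H : SimpleGraph V} (h : G ≤ H) : Mad G ≤ Mad H := by
  apply mad_le
  intro Y hY
  refine le_trans ?_ (le_mad H Y hY)
  have hc : (0:ℝ) ≤ Y.card := by positivity
  have hm : (inducedEdgeCnt G Y : ℝ) ≤ inducedEdgeCnt H Y := by
    exact_mod_cast inducedEdgeCnt_mono h Y
  gcongr

lemma mad_bound [Nonempty V] [DecidableEq V] (G : SimpleGraph V) :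
    Mad G ≤ 2 * Fintype.card (Sym2 V) := by
  apply mad_le
  intro Y hY
  have h1 : (1:ℝ) ≤ Y.card := by exact_mod_cast Finset.card_pos.mpr hY
  have h2 : (inducedEdgeCnt G Y : ℝ) ≤ Fintype.card (Sym2 V) := by
    have := Set.ncard_le_ncard (Set.subset_univ {e : Sym2 V | e ∈ G.edgeSet ∧ ∀ v ∈ e, v ∈ Y})
      (Set.toFinite _)
    rw [Set.ncard_univ, Nat.card_eq_fintype_card] at this
    exact_mod_cast this
  calc 2 * (inducedEdgeCnt G Y : ℝ) / Y.card ≤ 2 * (inducedEdgeCnt G Y : ℝ) :=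
        div_le_self (by positivity) h1
    _ ≤ 2 * Fintype.card (Sym2 V) := by linarith

lemma inducedEdgeCnt_le_offdiag [DecidableEq V] (G : SimpleGraph V)
    (X : Finset V) : inducedEdgeCnt G X ≤ X.card * X.card - X.card := by
  have hsub : {e : Sym2 V | e ∈ G.edgeSet ∧ ∀ v ∈ e, v ∈ X}
      ⊆ ↑(X.offDiag.image (fun p => s(p.1, p.2))) := by
    rintro e ⟨he, hmem⟩
    induction e with
    | _ a b =>
      simp only [Finset.coe_image, Set.mem_image, Finset.mem_coe, Finset.mem_offDiag]
      exact ⟨(a, b), ⟨hmem a (Sym2.mem_mk_left a b), hmem b (Sym2.mem_mk_right a b),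
        (G.ne_of_adj he)⟩, rfl⟩
  calc inducedEdgeCnt G X ≤ (X.offDiag.image (fun p => s(p.1, p.2))).card := by
        have := Set.ncard_le_ncard hsub (Set.toFinite _)
        rwa [Set.ncard_coe_finset] at this
    _ ≤ X.offDiag.card := Finset.card_image_le
    _ = X.card * X.card - X.card := Finset.offDiag_card X

end AuxHelpers

lemma mSumSet_bddAbove (k n : ℕ) (hn : 1 ≤ n) :
    BddAbove {s : ℝ | ∃ G : Fin k → SimpleGraph (Fin n), IsKDecomp G ∧ s = ∑ i, Mad (G i)} := by
  haveI : Nonempty (Fin n) := ⟨⟨0, by omega⟩⟩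
  refine ⟨k * (2 * Fintype.card (Sym2 (Fin n))), ?_⟩
  rintro s ⟨F, -, rfl⟩
  calc ∑ i, Mad (F i) ≤ ∑ _i : Fin k, (2 * (Fintype.card (Sym2 (Fin n)) : ℝ)) :=
        Finset.sum_le_sum (fun i _ => mad_bound (F i))
    _ = k * (2 * Fintype.card (Sym2 (Fin n))) := by
        rw [Finset.sum_const, Finset.card_univ, Fintype.card_fin, nsmul_eq_mul]

/-- in an optimal packing, the sets realizing the `Mad` values
cover all vertices. -/
theorem mad_realizing_sets_cover (n k : ℕ) (hn : 3 ≤ n) (hk2 : 2 ≤ k)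
    (hk : k ≤ Nat.choose n 2) (G : Fin k → SimpleGraph (Fin n))
    (hdisj : ∀ i j, i ≠ j → Disjoint (G i).edgeSet (G j).edgeSet)
    (hopt : ∑ i, Mad (G i) = MSum k n)
    (X : Fin k → Finset (Fin n))
    (hX : ∀ j, (X j).Nonempty ∧
      2 * (inducedEdgeCnt (G j) (X j) : ℝ) / ((X j).card : ℝ) = Mad (G j)) :
    (⋃ j, ((X j : Set (Fin n)))) = Set.univ := by
  classical
  haveI hne : Nonempty (Fin n) := ⟨⟨0, by omega⟩⟩
  haveI : NeZero k := ⟨by omega⟩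
  by_contra hcov
  obtain ⟨v, hv⟩ : ∃ v : Fin n, ∀ j, v ∉ X j := by
    by_contra h
    push_neg at h
    apply hcov
    ext w
    simp only [Set.mem_iUnion, Set.mem_univ, iff_true, Finset.mem_coe]
    obtain ⟨j, hj⟩ := h w
    exact ⟨j, hj⟩
  -- the modified family G'
  set H : Fin k → SimpleGraph (Fin n) := fun j => (G j).deleteEdges {e | v ∈ e} with hHdef
  set T : Set (Sym2 (Fin n)) := (fun w => s(v, w)) '' ↑(X 0) with hTdef
  set G' : Fin k → SimpleGraph (Fin n) :=
    Function.update H 0 (H 0 ⊔ SimpleGraph.fromEdgeSet T) with hG'def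
  have hHset : ∀ j, (H j).edgeSet = (G j).edgeSet \ {e | v ∈ e} := fun j =>
    SimpleGraph.edgeSet_deleteEdges _
  have hTv : ∀ e ∈ T, v ∈ e := by
    rintro e ⟨w, hw, rfl⟩
    exact Sym2.mem_mk_left v w
  have hvX0 : v ∉ X 0 := hv 0
  have hstar : (SimpleGraph.fromEdgeSet T).edgeSet = T := by
    rw [SimpleGraph.edgeSet_fromEdgeSet]
    ext e
    simp only [Set.mem_diff, Set.mem_setOf_eq, and_iff_left_iff_imp]
    rintro ⟨w, hw, rfl⟩ hdiag
    exact hvX0 ((Sym2.mk_isDiag_iff.mp hdiag) ▸ hw)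
  have hG'0 : (G' 0).edgeSet = ((G 0).edgeSet \ {e | v ∈ e}) ∪ T := by
    rw [hG'def, Function.update_self, SimpleGraph.edgeSet_sup, hHset, hstar]
  have hG'j : ∀ j, j ≠ 0 → (G' j).edgeSet = (G j).edgeSet \ {e | v ∈ e} := by
    intro j hj
    rw [hG'def, Function.update_of_ne hj, hHset]
  -- disjointness of G'
  have hdisj' : ∀ i j, i ≠ j → Disjoint (G' i).edgeSet (G' j).edgeSet := by
    have key : ∀ j, j ≠ 0 → ∀ e ∈ (G' j).edgeSet, e ∈ (G j).edgeSet ∧ v ∉ e := by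
      intro j hj e he
      rw [hG'j j hj] at he
      exact he
    have key0 : ∀ e ∈ (G' 0).edgeSet, (e ∈ (G 0).edgeSet ∧ v ∉ e) ∨ e ∈ T := by
      intro e he
      rw [hG'0] at he
      exact he
    intro i j hij
    rw [Set.disjoint_left]
    intro e hei hej
    by_cases hi : i = 0
    · subst hi
      have hj : j ≠ 0 := fun h => hij h.symm
      rcases key0 e hei with ⟨h1, _⟩ | hTe
      · exact Set.disjoint_left.mp (hdisj 0 j hij) h1 (key j hj e hej).1
      · exact (key j hj e hej).2 (hTv e hTe)
    · by_cases hj : j = 0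
      · subst hj
        rcases key0 e hej with ⟨h1, _⟩ | hTe
        · exact Set.disjoint_left.mp (hdisj i 0 hij) (key i hi e hei).1 h1
        · exact (key i hi e hei).2 (hTv e hTe)
      · exact Set.disjoint_left.mp (hdisj i j hij) (key i hi e hei).1 (key j hj e hej).1
  -- Mad does not decrease for j ≠ 0
  have hstep : ∀ j, j ≠ 0 → Mad (G j) ≤ Mad (G' j) := by
    intro j hj
    rw [← (hX j).2]
    refine le_trans ?_ (le_mad (G' j) (X j) (hX j).1)
    have hc : (0:ℝ) ≤ (X j).card := by positivity
    have hm : (inducedEdgeCnt (G j) (X j) : ℝ) ≤ inducedEdgeCnt (G' j) (X j) := by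
      have : inducedEdgeCnt (G j) (X j) ≤ inducedEdgeCnt (G' j) (X j) := by
        apply Set.ncard_le_ncard _ (Set.toFinite _)
        rintro e ⟨he, hmem⟩
        refine ⟨?_, hmem⟩
        rw [hG'j j hj]
        exact ⟨he, fun hve => hv j (hmem v hve)⟩
      exact_mod_cast this
    gcongr
  -- Mad strictly increases for j = 0
  have hstrict : Mad (G 0) < Mad (G' 0) := by
    have hs1 : 1 ≤ (X 0).card := Finset.card_pos.mpr (hX 0).1
    set A : Set (Sym2 (Fin n)) :=
      {e : Sym2 (Fin n) | e ∈ (G 0).edgeSet ∧ ∀ w ∈ e, w ∈ X 0} with hAdef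
    have hAT : Disjoint A T := by
      rw [Set.disjoint_left]
      rintro e ⟨_, hmem⟩ hTe
      exact hvX0 (hmem v (hTv e hTe))
    have hTcard : T.ncard = (X 0).card := by
      rw [hTdef, Set.ncard_image_of_injOn, Set.ncard_coe_finset]
      intro a _ b _ hab
      exact Sym2.congr_right.mp hab
    have hsub : A ∪ T ⊆ {e : Sym2 (Fin n) | e ∈ (G' 0).edgeSet ∧ ∀ w ∈ e, w ∈ insert v (X 0)} := by
      rintro e (⟨he, hmem⟩ | hTe)
      · refine ⟨?_, fun w hw => Finset.mem_insert_of_mem (hmem w hw)⟩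
        rw [hG'0]
        exact Or.inl ⟨he, fun hve => hvX0 (hmem v hve)⟩
      · obtain ⟨w, hw, rfl⟩ := hTe
        refine ⟨by rw [hG'0]; exact Or.inr ⟨w, hw, rfl⟩, fun u hu => ?_⟩
        rcases Sym2.mem_iff.mp hu with rfl | rfl
        · exact Finset.mem_insert_self _ _
        · exact Finset.mem_insert_of_mem hw
    have hcount : inducedEdgeCnt (G 0) (X 0) + (X 0).card
        ≤ inducedEdgeCnt (G' 0) (insert v (X 0)) := by
      have h1 : (A ∪ T).ncard = inducedEdgeCnt (G 0) (X 0) + (X 0).card := by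
        rw [Set.ncard_union_eq hAT (Set.toFinite _) (Set.toFinite _), hTcard]
        rfl
      rw [← h1]
      exact Set.ncard_le_ncard hsub (Set.toFinite _)
    have hcard_ins : (insert v (X 0)).card = (X 0).card + 1 :=
      Finset.card_insert_of_notMem hvX0
    have hub : inducedEdgeCnt (G 0) (X 0) ≤ (X 0).card * (X 0).card - (X 0).card :=
      inducedEdgeCnt_le_offdiag _ _
    rw [← (hX 0).2]
    refine lt_of_lt_of_le ?_ (le_mad (G' 0) (insert v (X 0)) (Finset.insert_nonempty _ _))
    rw [hcard_ins]
    have hsR : (1:ℝ) ≤ ((X 0).card : ℝ) := by exact_mod_cast hs1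
    have hubR : (inducedEdgeCnt (G 0) (X 0) : ℝ)
        ≤ ((X 0).card : ℝ) * ((X 0).card : ℝ) - ((X 0).card : ℝ) := by
      have hle : (X 0).card ≤ (X 0).card * (X 0).card := Nat.le_mul_of_pos_left _ hs1
      have := hub
      zify [hle] at this
      exact_mod_cast this
    have hcR : (inducedEdgeCnt (G 0) (X 0) : ℝ) + ((X 0).card : ℝ)
        ≤ (inducedEdgeCnt (G' 0) (insert v (X 0)) : ℝ) := by exact_mod_cast hcount
    rw [div_lt_div_iff₀ (by linarith) (by push_cast; linarith)]
    push_cast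
    nlinarith
  -- extend G' to a decomposition D
  set R : Set (Sym2 (Fin n)) :=
    (⊤ : SimpleGraph (Fin n)).edgeSet \ ⋃ i, (G' i).edgeSet with hRdef
  set D : Fin k → SimpleGraph (Fin n) :=
    Function.update G' 0 (G' 0 ⊔ SimpleGraph.fromEdgeSet R) with hDdef
  have hG'leD : ∀ j, G' j ≤ D j := by
    intro j
    by_cases hj : j = 0
    · subst hj
      rw [hDdef, Function.update_self]
      exact le_sup_left
    · rw [hDdef, Function.update_of_ne hj]
  have hRsub : (SimpleGraph.fromEdgeSet R).edgeSet ⊆ R :=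
    (SimpleGraph.edgeSet_fromEdgeSet R) ▸ Set.diff_subset
  have hRdisj : ∀ i, Disjoint (SimpleGraph.fromEdgeSet R).edgeSet (G' i).edgeSet := by
    intro i
    rw [Set.disjoint_left]
    intro e he hei
    exact (hRsub he).2 (Set.mem_iUnion.mpr ⟨i, hei⟩)
  have hD0 : (D 0).edgeSet = (G' 0).edgeSet ∪ (SimpleGraph.fromEdgeSet R).edgeSet := by
    rw [hDdef, Function.update_self, SimpleGraph.edgeSet_sup]
  have hDj : ∀ j, j ≠ 0 → (D j).edgeSet = (G' j).edgeSet := by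
    intro j hj
    rw [hDdef, Function.update_of_ne hj]
  have hDdecomp : IsKDecomp D := by
    constructor
    · intro i j hij
      rw [Set.disjoint_left]
      intro e hei hej
      by_cases hi : i = 0
      · subst hi
        have hj : j ≠ 0 := fun h => hij h.symm
        rw [hD0] at hei
        rw [hDj j hj] at hej
        rcases hei with hei | hei
        · exact Set.disjoint_left.mp (hdisj' 0 j hij) hei hej
        · exact Set.disjoint_left.mp (hRdisj j) hei hej
      · by_cases hj : j = 0
        · subst hj
          rw [hD0] at hej
          rw [hDj i hi] at hei
          rcases hej with hej | hej
          · exact Set.disjoint_left.mp (hdisj' i 0 hij) hei hej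
          · exact Set.disjoint_left.mp (hRdisj i) hej hei
        · rw [hDj i hi] at hei
          rw [hDj j hj] at hej
          exact Set.disjoint_left.mp (hdisj' i j hij) hei hej
    · apply Set.Subset.antisymm
      · rintro e he
        obtain ⟨i, hi⟩ := Set.mem_iUnion.mp he
        exact SimpleGraph.edgeSet_mono le_top hi
      · intro e he
        by_cases hcase : e ∈ ⋃ i, (G' i).edgeSet
        · obtain ⟨i, hi⟩ := Set.mem_iUnion.mp hcase
          exact Set.mem_iUnion.mpr ⟨i, SimpleGraph.edgeSet_mono (hG'leD i) hi⟩
        · refine Set.mem_iUnion.mpr ⟨0, ?_⟩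
          rw [hD0]
          right
          rw [SimpleGraph.edgeSet_fromEdgeSet]
          exact ⟨⟨he, hcase⟩, (⊤ : SimpleGraph (Fin n)).not_isDiag_of_mem_edgeSet he⟩
  -- final contradiction
  have h1 : ∑ i, Mad (G i) < ∑ i, Mad (G' i) := by
    apply Finset.sum_lt_sum
    · intro i _
      by_cases hi : i = 0
      · subst hi; exact hstrict.le
      · exact hstep i hi
    · exact ⟨0, Finset.mem_univ 0, hstrict⟩
  have h2 : ∑ i, Mad (G' i) ≤ ∑ i, Mad (D i) :=
    Finset.sum_le_sum fun i _ => mad_mono (hG'leD i)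
  have h3 : ∑ i, Mad (D i) ≤ MSum k n :=
    le_csSup (mSumSet_bddAbove k n (by omega)) ⟨D, hDdecomp, rfl⟩
  linarith [hopt.le, h1, h2, h3, hopt.ge]
end
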